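/- For every description [l_1, ..., l_t] of a line of length n, with S = Σ l_i: if t ≥ 1 and n ≥ S + t − 1 + max_i l_i, then for every position p there is a satisfying filling in which cell p is empty. -/

import Mathlib

/-- Maximal run lengths of `true` (filled cells) in a list of booleans, left to right. -/
def runs : List Bool → List ℕ
  | [] => []
  | false :: xs => runs xs
  | true :: xs => ((xs.takeWhile id).length + 1) :: runs (xs.dropWhile id)
termination_by l => l.length
decreasing_by
  all_goals simp_wf
  all_goals first
    | omega
    | (have := List.Sublist.length_le (List.dropWhile_sublist (l := xs) id); omega)

lemma runs_false_cons (xs : List Bool) : runs (false :: xs) = runs xs := by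
  simp [runs]

lemma runs_replicate_false (k : ℕ) : runs (List.replicate k false) = [] := by
  induction k with
  | zero => simp [runs]
  | succ k ih => simpa [List.replicate_succ, runs_false_cons] using ih

lemma takeWhile_replicate_append (k : ℕ) (t : List Bool) (ht : t.head? ≠ some true) :
    (List.replicate k true ++ t).takeWhile id = List.replicate k true ∧
    (List.replicate k true ++ t).dropWhile id = t := by
  induction k with
  | zero =>
    cases t with
    | nil => simp
    | cons b bs =>
      cases b
      · simp [List.takeWhile, List.dropWhile]
      · simp at ht
  | succ k ih =>
    simp [List.replicate_succ, List.takeWhile, List.dropWhile, ih.1, ih.2]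

lemma runs_block (l : ℕ) (hl : 1 ≤ l) (t : List Bool) (ht : t.head? ≠ some true) :
    runs (List.replicate l true ++ t) = l :: runs t := by
  obtain ⟨k, rfl⟩ : ∃ k, l = k + 1 := ⟨l - 1, by omega⟩
  have h := takeWhile_replicate_append k t ht
  rw [List.replicate_succ, List.cons_append, runs, h.1, h.2]
  simp


lemma getD_replicate_false (k p : ℕ) :
    (List.replicate k false).getD p false = false := by
  unfold List.getD
  cases h : (List.replicate k false)[p]? with
  | none => rfl
  | some b =>
    have := List.mem_of_getElem? h
    simp [List.eq_of_mem_replicate this]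

/-- Existence of a filling of any sufficiently long line. -/
lemma existsFill : ∀ (d : List ℕ), (∀ l ∈ d, 1 ≤ l) → ∀ m, d.sum + (d.length - 1) ≤ m →
    ∃ w : List Bool, w.length = m ∧ runs w = d := by
  intro d
  induction d with
  | nil =>
    intro _ m _
    exact ⟨List.replicate m false, by simp, runs_replicate_false m⟩
  | cons l d' ih =>
    intro hpos m hm
    have hl : 1 ≤ l := hpos l (by simp)
    cases d' with
    | nil =>
      have hlm : l ≤ m := by simp at hm; omega
      refine ⟨List.replicate l true ++ List.replicate (m - l) false, by simp; omega, ?_⟩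
      rw [runs_block l hl _ (by cases h : m - l <;> simp [List.replicate_succ, h]),
        runs_replicate_false]
    | cons l₂ d'' =>
      have hm' : (l₂ :: d'').sum + ((l₂ :: d'').length - 1) ≤ m - l - 1 := by
        simp at hm ⊢; omega
      obtain ⟨w', hw'len, hw'runs⟩ := ih (fun x hx => hpos x (by simp [hx])) (m - l - 1) hm'
      refine ⟨List.replicate l true ++ false :: w', ?_, ?_⟩
      · simp [hw'len]; simp at hm; omega
      · rw [runs_block l hl _ (by simp), runs_false_cons, hw'runs]

lemma avoidFill : ∀ (d : List ℕ), (∀ l ∈ d, 1 ≤ l) →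
    ∀ m, d.sum + (d.length - 1) + d.foldr max 0 ≤ m → ∀ p,
    ∃ w : List Bool, w.length = m ∧ runs w = d ∧ w.getD p false = false := by
  intro d
  induction d with
  | nil =>
    intro _ m _ p
    refine ⟨List.replicate m false, by simp, runs_replicate_false m, ?_⟩
    exact getD_replicate_false m p
  | cons l d' ih =>
    intro hpos m hm p
    have hl : 1 ≤ l := hpos l (by simp)
    have hpos' : ∀ x ∈ d', 1 ≤ x := fun x hx => hpos x (by simp [hx])
    by_cases hp : p < l
    · -- put a gap of length p+1, then the first block, then a packed rest
      have hgap : p + 1 + l ≤ m := by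
        simp [List.foldr] at hm
        have : l ≤ max l (d'.foldr max 0) := le_max_left _ _
        omega
      cases d' with
      | nil =>
        refine ⟨List.replicate (p + 1) false ++
          (List.replicate l true ++ List.replicate (m - (p + 1) - l) false), ?_, ?_, ?_⟩
        · simp; omega
        · have : ∀ k, runs (List.replicate k false ++
              (List.replicate l true ++ List.replicate (m - (p + 1) - l) false)) = [l] := by
            intro k
            induction k with
            | zero =>
              simp only [List.replicate, List.nil_append]
              rw [runs_block l hl _
                (by cases h : m - (p+1) - l <;> simp [List.replicate_succ, h]),
                runs_replicate_false]
            | succ k ihk =>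
              rw [List.replicate_succ, List.cons_append, runs_false_cons, ihk]
          exact this (p + 1)
        · rw [List.getD_append _ _ _ _ (by simp)]
          exact getD_replicate_false (p+1) p
      | cons l₂ d'' =>
        have hrest : (l₂ :: d'').sum + ((l₂ :: d'').length - 1) ≤ m - (p + 1) - l - 1 := by
          simp [List.foldr] at hm ⊢
          have h1 : l ≤ max l (max l₂ (List.foldr max 0 d'')) := le_max_left _ _
          omega
        obtain ⟨w', hw'len, hw'runs⟩ := existsFill (l₂ :: d'') hpos' _ hrest
        refine ⟨List.replicate (p + 1) false ++
          (List.replicate l true ++ false :: w'), ?_, ?_, ?_⟩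
        · simp [hw'len]
          simp [List.foldr] at hm
          have h1 : l ≤ max l (max l₂ (List.foldr max 0 d'')) := le_max_left _ _
          omega
        · have : ∀ k, runs (List.replicate k false ++
              (List.replicate l true ++ false :: w')) = l :: (l₂ :: d'') := by
            intro k
            induction k with
            | zero =>
              simp only [List.replicate, List.nil_append]
              rw [runs_block l hl _ (by simp), runs_false_cons, hw'runs]
            | succ k ihk =>
              rw [List.replicate_succ, List.cons_append, runs_false_cons, ihk]
          exact this (p + 1)
        · rw [List.getD_append _ _ _ _ (by simp)]
          exact getD_replicate_false (p+1) p
    · -- first block at the very start, recurse on the rest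
      push_neg at hp
      have hmax' : d'.foldr max 0 ≤ (l :: d').foldr max 0 := by
        simp [List.foldr]
      have hrec : d'.sum + (d'.length - 1) + d'.foldr max 0 ≤ m - l - 1 := by
        cases d' with
        | nil =>
          simp [List.foldr] at hm ⊢ <;> omega
        | cons l₂ d'' =>
          simp [List.foldr] at hm ⊢
          have h1 : max l₂ (List.foldr max 0 d'') ≤ max l (max l₂ (List.foldr max 0 d'')) :=
            le_max_right _ _
          omega
      obtain ⟨w', hw'len, hw'runs, hw'getD⟩ := ih hpos' (m - l - 1) hrec (p - l - 1)
      have hml : l + 1 ≤ m := by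
        simp [List.foldr] at hm
        have h1 : l ≤ max l (d'.foldr max 0) := le_max_left _ _
        omega
      refine ⟨List.replicate l true ++ false :: w', ?_, ?_, ?_⟩
      · simp [hw'len]; omega
      · rw [runs_block l hl _ (by simp), runs_false_cons, hw'runs]
      · rw [List.getD_append_right _ _ _ _ (by simp; omega)]
        simp only [List.length_replicate]
        rcases Nat.lt_or_ge l p with h | h
        · have : p - l = (p - l - 1) + 1 := by omega
          rw [this]
          simpa using hw'getD
        · have : p - l = 0 := by omega
          simp [this]

/-- If t ≥ 1 and n ≥ S + (t−1) + max_i l_i, then for every position there is a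
satisfying filling with that cell empty (no cell is forced filled). -/
theorem stmt_16 (n : ℕ) (d : List ℕ) (hpos : ∀ l ∈ d, 1 ≤ l) (ht : 1 ≤ d.length)
    (hn : d.sum + (d.length - 1) + d.foldr max 0 ≤ n) :
    ∀ p < n, ∃ w : List Bool, w.length = n ∧ runs w = d ∧ w.getD p false = false := by
  intro p _
  exact avoidFill d hpos n hn p
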